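/- arXiv:2502.09248 — 2 statements merged into one kernel-verified Lean document; each statement's English description precedes it below -/
import Mathlib

section
/- (Descent property of the MM iteration for the Frobenius cost.) Let k ≥ 1, P ∈ ℂ^{k×p}, w ∈ ℂ^p, and let Q ∈ ℂ^{k×k} be Hermitian positive semidefinite. Define the cost f(w̄) = −4·Re(w̄ᴴ P w) − 2·Re(w̄ᴴ Q w̄) for w̄ ∈ ℂ^k. Let w̄⁰ ∈ 𝕋_k and set u = P w + Q w̄⁰. If every entry of u is nonzero, then the MM update w̄⁺ := Φ_𝕋(u) lies in 𝕋_k and satisfies f(w̄⁺) ≤ f(w̄⁰). -/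
open Matrix
open scoped ComplexOrder

/-!
The update is a majorize–minimize step. Since `Q ⪰ 0`, expanding `(w̄ - w̄⁰)ᴴ Q (w̄ - w̄⁰) ≥ 0`
bounds `f` above by a function affine in `w̄`, namely `-4·Re(w̄ᴴ u) + 2·Re(w̄⁰ᴴ Q w̄⁰)`, with
equality at `w̄⁰`. On the torus, `Re(w̄ᴴ u) ≤ ∑ |uᵢ|` with equality at `w̄ = Φ_𝕋(u)`, so the
update minimizes the majorant and `f(w̄⁺) ≤ majorant(w̄⁺) ≤ majorant(w̄⁰) = f(w̄⁰)`.
-/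

namespace Matrix

variable {𝕜 ι : Type*} [RCLike 𝕜]

/-- The phase map `Φ_𝕋`; a zero entry is sent to `0`. -/
noncomputable def torusPhase (u : ι → 𝕜) : ι → 𝕜 := fun i => u i / (‖u i‖ : 𝕜)

lemma norm_torusPhase_apply {u : ι → 𝕜} {i : ι} (hu : u i ≠ 0) : ‖torusPhase u i‖ = 1 := by
  rw [torusPhase, norm_div, RCLike.norm_ofReal, abs_norm, div_self (norm_ne_zero_iff.mpr hu)]

variable [Fintype ι]

lemma re_star_torusPhase_dotProduct (u : ι → 𝕜) :
    RCLike.re (star (torusPhase u) ⬝ᵥ u) = ∑ i, ‖u i‖ := by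
  rw [dotProduct, map_sum]
  refine Finset.sum_congr rfl fun i _ => ?_
  have hphase : star (torusPhase u i) * u i = (‖u i‖ : 𝕜) := by
    rw [torusPhase, star_div₀, RCLike.star_def, RCLike.conj_ofReal, div_mul_eq_mul_div,
      RCLike.conj_mul]
    by_cases hu : u i = 0
    · simp [hu]
    · have : (‖u i‖ : 𝕜) ≠ 0 := by exact_mod_cast norm_ne_zero_iff.mpr hu
      field_simp
  rw [Pi.star_apply, hphase, RCLike.ofReal_re]

lemma re_star_dotProduct_le_sum_norm {a : ι → 𝕜} (ha : ∀ i, ‖a i‖ ≤ 1) (u : ι → 𝕜) :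
    RCLike.re (star a ⬝ᵥ u) ≤ ∑ i, ‖u i‖ := by
  rw [dotProduct, map_sum]
  refine Finset.sum_le_sum fun i _ => ?_
  calc RCLike.re (star (a i) * u i) ≤ ‖star (a i) * u i‖ := RCLike.re_le_norm _
    _ = ‖a i‖ * ‖u i‖ := by rw [norm_mul, norm_star]
    _ ≤ ‖u i‖ := mul_le_of_le_one_left (norm_nonneg _) (ha i)

lemma re_star_dotProduct_le_re_star_torusPhase_dotProduct {a : ι → 𝕜} (ha : ∀ i, ‖a i‖ ≤ 1)
    (u : ι → 𝕜) : RCLike.re (star a ⬝ᵥ u) ≤ RCLike.re (star (torusPhase u) ⬝ᵥ u) :=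
  re_star_torusPhase_dotProduct u ▸ re_star_dotProduct_le_sum_norm ha u

lemma IsHermitian.re_star_dotProduct_mulVec_comm {Q : Matrix ι ι 𝕜} (hQ : Q.IsHermitian)
    (x y : ι → 𝕜) : RCLike.re (star x ⬝ᵥ Q *ᵥ y) = RCLike.re (star y ⬝ᵥ Q *ᵥ x) := by
  have hstar : star (star x ⬝ᵥ Q *ᵥ y) = star y ⬝ᵥ Q *ᵥ x := by
    rw [star_dotProduct, star_star, star_mulVec, hQ.eq, ← dotProduct_mulVec]
  rw [← hstar, RCLike.star_def, RCLike.conj_re]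

lemma PosSemidef.two_mul_re_star_dotProduct_mulVec_le {Q : Matrix ι ι 𝕜} (hQ : Q.PosSemidef)
    (x y : ι → 𝕜) :
    2 * RCLike.re (star x ⬝ᵥ Q *ᵥ y) ≤
      RCLike.re (star x ⬝ᵥ Q *ᵥ x) + RCLike.re (star y ⬝ᵥ Q *ᵥ y) := by
  have hnonneg : 0 ≤ RCLike.re (star (x - y) ⬝ᵥ Q *ᵥ (x - y)) :=
    (RCLike.nonneg_iff.mp (hQ.dotProduct_mulVec_nonneg (x - y))).1
  have hcomm := hQ.isHermitian.re_star_dotProduct_mulVec_comm x y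
  simp only [star_sub, mulVec_sub, sub_dotProduct, dotProduct_sub, map_sub] at hnonneg
  linarith

end Matrix

theorem mm_descent_frobenius_general {p k : ℕ}
    (P : Matrix (Fin k) (Fin p) ℂ) (w : Fin p → ℂ)
    (Q : Matrix (Fin k) (Fin k) ℂ) (hQ : Q.PosSemidef)
    (f : (Fin k → ℂ) → ℝ)
    (hf : ∀ wb, f wb =
      -(4 * (star wb ⬝ᵥ P *ᵥ w).re) - 2 * (star wb ⬝ᵥ Q *ᵥ wb).re)
    (wb0 : Fin k → ℂ) (hwb0 : ∀ i, ‖wb0 i‖ = 1)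
    (u : Fin k → ℂ) (hu : u = P *ᵥ w + Q *ᵥ wb0)
    (hu0 : ∀ i, u i ≠ 0)
    (wbplus : Fin k → ℂ)
    (hwbplus : ∀ i, wbplus i = u i / ((‖u i‖ : ℝ) : ℂ)) :
    (∀ i, ‖wbplus i‖ = 1) ∧ f wbplus ≤ f wb0 := by
  obtain rfl : wbplus = torusPhase u := funext hwbplus
  refine ⟨fun i => norm_torusPhase_apply (hu0 i), ?_⟩
  have hmin := re_star_dotProduct_le_re_star_torusPhase_dotProduct (fun i => (hwb0 i).le) u
  have hmaj := hQ.two_mul_re_star_dotProduct_mulVec_le (torusPhase u) wb0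
  simp only [hf, hu, dotProduct_add, map_add, RCLike.re_to_complex] at hmin hmaj ⊢
  linarith

/-- Descent property of the MM iteration for the Frobenius cost
`f(w̄) = −4·Re(w̄ᴴ P w) − 2·Re(w̄ᴴ Q w̄)` with `Q` Hermitian positive semidefinite:
with `u = P w + Q w̄⁰` having all entries nonzero, the MM update `w̄⁺ = Φ_𝕋(u)`
lies on the torus and satisfies `f(w̄⁺) ≤ f(w̄⁰)`. -/
theorem mm_descent_frobenius {p k : ℕ} (hk : 1 ≤ k)
    (P : Matrix (Fin k) (Fin p) ℂ) (w : Fin p → ℂ)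
    (Q : Matrix (Fin k) (Fin k) ℂ) (hQ : Q.PosSemidef)
    (f : (Fin k → ℂ) → ℝ)
    (hf : ∀ wb, f wb =
      -(4 * (star wb ⬝ᵥ P *ᵥ w).re) - 2 * (star wb ⬝ᵥ Q *ᵥ wb).re)
    (wb0 : Fin k → ℂ) (hwb0 : ∀ i, ‖wb0 i‖ = 1)
    (u : Fin k → ℂ) (hu : u = P *ᵥ w + Q *ᵥ wb0)
    (hu0 : ∀ i, u i ≠ 0)
    (wbplus : Fin k → ℂ)
    (hwbplus : ∀ i, wbplus i = u i / ((‖u i‖ : ℝ) : ℂ)) :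
    (∀ i, ‖wbplus i‖ = 1) ∧ f wbplus ≤ f wb0 :=
  mm_descent_frobenius_general P w Q hQ f hf wb0 hwb0 u hu hu0 wbplus hwbplus
end

section
/- Let p, k ≥ 1. Let Ψ̃ = fromBlocks(Ψ_p, Ψ_pnᵀ, Ψ_pn, Ψ_n) be a real symmetric positive definite (p+k)×(p+k) matrix and let Σ̃ = fromBlocks(Σ_p, Σ_pnᴴ, Σ_pn, Σ_n) ∈ ℂ^{(p+k)×(p+k)} be Hermitian. With D = Ψ_n − Ψ_pn Ψ_p⁻¹ Ψ_pnᵀ and A = −D⁻¹ Ψ_pn Ψ_p⁻¹, fix w ∈ ℂ^p and define, for w̄ ∈ ℂ^k, the Kullback–Leibler phase-linking cost restricted to the new images, f(w̄) := (Sum.elim w w̄)ᴴ (Ψ̃⁻¹ ∘ Σ̃) (Sum.elim w w̄). Then f(w̄) is a real number for every w̄ ∈ ℂ^k, and f(w̄) = wᴴ(F⁻¹ ∘ Σ_p)w + 2·Re(w̄ᴴ (A ∘ Σ_pn) w) + Re(w̄ᴴ (D⁻¹ ∘ Σ_n) w̄), where F = Ψ_p − Ψ_pnᵀ Ψ_n⁻¹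 Ψ_pn. -/
open Matrix

private lemma hadamard_fromBlocks' {α : Type*} [Mul α] {p k : Type*}
    (A A' : Matrix p p α) (B B' : Matrix p k α) (C C' : Matrix k p α) (D D' : Matrix k k α) :
    Matrix.hadamard (Matrix.fromBlocks A B C D) (Matrix.fromBlocks A' B' C' D') =
      Matrix.fromBlocks (Matrix.hadamard A A') (Matrix.hadamard B B')
        (Matrix.hadamard C C') (Matrix.hadamard D D') := by
  ext (i | i) (j | j) <;> simp [Matrix.hadamard_apply]

private lemma quad_conj' {m n : Type*} [Fintype m] [Fintype n] (N : Matrix m n ℂ)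
    (x : n → ℂ) (y : m → ℂ) :
    star x ⬝ᵥ Nᴴ *ᵥ y = star (star y ⬝ᵥ N *ᵥ x) := by
  rw [star_dotProduct, star_mulVec, conjTranspose_conjTranspose, dotProduct_mulVec]

/-- The KL phase-linking cost restricted to the new images,
`f(w̄) = (Sum.elim w w̄)ᴴ (Ψ̃⁻¹ ∘ Σ̃) (Sum.elim w w̄)`, is real-valued and equals
`wᴴ(F⁻¹ ∘ Σ_p)w + 2·Re(w̄ᴴ (A ∘ Σ_pn) w) + Re(w̄ᴴ (D⁻¹ ∘ Σ_n) w̄)`. -/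
theorem kl_cost_real_decomposition {p k : ℕ} (hp : 1 ≤ p) (hk : 1 ≤ k)
    (Psip : Matrix (Fin p) (Fin p) ℝ) (Psipn : Matrix (Fin k) (Fin p) ℝ)
    (Psin : Matrix (Fin k) (Fin k) ℝ)
    (hPsi : (Matrix.fromBlocks Psip Psipnᵀ Psipn Psin).PosDef)
    (Sigp : Matrix (Fin p) (Fin p) ℂ) (Sigpn : Matrix (Fin k) (Fin p) ℂ)
    (Sign : Matrix (Fin k) (Fin k) ℂ)
    (hSig : (Matrix.fromBlocks Sigp Sigpnᴴ Sigpn Sign).IsHermitian)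
    (F : Matrix (Fin p) (Fin p) ℝ) (hF : F = Psip - Psipnᵀ * Psin⁻¹ * Psipn)
    (D : Matrix (Fin k) (Fin k) ℝ) (hD : D = Psin - Psipn * Psip⁻¹ * Psipnᵀ)
    (A : Matrix (Fin k) (Fin p) ℝ) (hA : A = -(D⁻¹ * Psipn * Psip⁻¹))
    (w : Fin p → ℂ) :
    ∀ wb : Fin k → ℂ,
      (star (Sum.elim w wb) ⬝ᵥ
          (Matrix.hadamard
            (((Matrix.fromBlocks Psip Psipnᵀ Psipn Psin)⁻¹).map Complex.ofReal)
            (Matrix.fromBlocks Sigp Sigpnᴴ Sigpn Sign)) *ᵥ (Sum.elim w wb)).im = 0 ∧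
      star (Sum.elim w wb) ⬝ᵥ
          (Matrix.hadamard
            (((Matrix.fromBlocks Psip Psipnᵀ Psipn Psin)⁻¹).map Complex.ofReal)
            (Matrix.fromBlocks Sigp Sigpnᴴ Sigpn Sign)) *ᵥ (Sum.elim w wb)
        = star w ⬝ᵥ (Matrix.hadamard ((F⁻¹).map Complex.ofReal) Sigp) *ᵥ w
          + ((2 * (star wb ⬝ᵥ
              (Matrix.hadamard (A.map Complex.ofReal) Sigpn) *ᵥ w).re : ℝ) : ℂ)
          + (((star wb ⬝ᵥ
              (Matrix.hadamard ((D⁻¹).map Complex.ofReal) Sign) *ᵥ wb).re : ℝ) : ℂ) := by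
  intro wb
  -- block symmetry facts for Ψ
  have hconj : (Matrix.fromBlocks Psip Psipnᵀ Psipn Psin)ᴴ
      = Matrix.fromBlocks Psip Psipnᵀ Psipn Psin := hPsi.1
  rw [fromBlocks_conjTranspose] at hconj
  obtain ⟨h11, h12, h21, h22⟩ := fromBlocks_inj.mp hconj
  have hPsipT : Psipᵀ = Psip := by
    rw [← conjTranspose_eq_transpose_of_trivial]; exact h11
  have hPsinT : Psinᵀ = Psin := by
    rw [← conjTranspose_eq_transpose_of_trivial]; exact h22
  -- block hermitian facts for Σ
  have hSig' : (Matrix.fromBlocks Sigp Sigpnᴴ Sigpn Sign)ᴴ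
      = Matrix.fromBlocks Sigp Sigpnᴴ Sigpn Sign := hSig
  rw [fromBlocks_conjTranspose] at hSig'
  obtain ⟨hSp, -, -, hSn⟩ := fromBlocks_inj.mp hSig'
  -- positive definiteness of the diagonal blocks
  have hstar1 : ∀ x : Fin p → ℝ,
      star (Sum.elim x (0 : Fin k → ℝ)) = Sum.elim (star x) (0 : Fin k → ℝ) :=
    fun x => funext fun i => by cases i <;> simp
  have hstar2 : ∀ x : Fin k → ℝ,
      star (Sum.elim (0 : Fin p → ℝ) x) = Sum.elim (0 : Fin p → ℝ) (star x) :=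
    fun x => funext fun i => by cases i <;> simp
  have hPsipPD : Psip.PosDef := by
    refine Matrix.PosDef.of_dotProduct_mulVec_pos h11 (fun x hx => ?_)
    have hne : Sum.elim x (0 : Fin k → ℝ) ≠ 0 := by
      intro h; exact hx (funext fun i => congrFun h (Sum.inl i))
    have := hPsi.dotProduct_mulVec_pos hne
    rw [fromBlocks_mulVec, hstar1, dotProduct_block] at this
    simpa using this
  have hPsinPD : Psin.PosDef := by
    refine Matrix.PosDef.of_dotProduct_mulVec_pos h22 (fun x hx => ?_)
    have hne : Sum.elim (0 : Fin p → ℝ) x ≠ 0 := by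
      intro h; exact hx (funext fun i => congrFun h (Sum.inr i))
    have := hPsi.dotProduct_mulVec_pos hne
    rw [fromBlocks_mulVec, hstar2, dotProduct_block] at this
    simpa using this
  haveI iΨ := hPsi.isUnit.invertible
  haveI iPsip := hPsipPD.isUnit.invertible
  haveI iPsin := hPsinPD.isUnit.invertible
  haveI iD' : Invertible (Psin - Psipn * ⅟Psip * Psipnᵀ) :=
    invertibleOfFromBlocks₁₁Invertible Psip Psipnᵀ Psipn Psin
  haveI iF' : Invertible (Psip - Psipnᵀ * ⅟Psin * Psipn) :=
    invertibleOfFromBlocks₂₂Invertible Psip Psipnᵀ Psipn Psin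
  haveI iD : Invertible D := by
    rw [hD, ← invOf_eq_nonsing_inv Psip]; exact iD'
  haveI iF : Invertible F := by
    rw [hF, ← invOf_eq_nonsing_inv Psin]; exact iF'
  -- the explicit block inverse
  have h1 := invOf_fromBlocks₁₁_eq Psip Psipnᵀ Psipn Psin
  have h2 := invOf_fromBlocks₂₂_eq Psip Psipnᵀ Psipn Psin
  simp only [invOf_eq_nonsing_inv] at h1 h2
  rw [← hD] at h1
  rw [← hF] at h2
  obtain ⟨e11, -, -, -⟩ := fromBlocks_inj.mp (h1.symm.trans h2)
  have hDT : Dᵀ = D := by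
    rw [hD]
    simp [transpose_sub, transpose_mul, transpose_nonsing_inv, hPsipT, hPsinT, Matrix.mul_assoc]
  have hFT : Fᵀ = F := by
    rw [hF]
    simp [transpose_sub, transpose_mul, transpose_nonsing_inv, hPsipT, hPsinT, Matrix.mul_assoc]
  have hAT : Aᵀ = -(Psip⁻¹ * Psipnᵀ * D⁻¹) := by
    rw [hA]
    simp [transpose_neg, transpose_mul, transpose_nonsing_inv, hPsipT, hDT, Matrix.mul_assoc]
  have hInv : (Matrix.fromBlocks Psip Psipnᵀ Psipn Psin)⁻¹
      = Matrix.fromBlocks F⁻¹ Aᵀ A D⁻¹ := by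
    rw [h1, e11, hAT, ← hA]
  -- hadamard blocks
  have hM12 : Matrix.hadamard (Aᵀ.map Complex.ofReal) Sigpnᴴ
      = (Matrix.hadamard (A.map Complex.ofReal) Sigpn)ᴴ := by
    ext i j
    simp [Matrix.hadamard_apply, Matrix.conjTranspose_apply, Matrix.map_apply,
      Matrix.transpose_apply, star_mul', Complex.star_def, Complex.conj_ofReal, mul_comm]
  -- expand the quadratic form
  have hsw : star (Sum.elim w wb) = Sum.elim (star w) (star wb) :=
    funext fun i => by cases i <;> rfl
  rw [hInv, fromBlocks_map, hadamard_fromBlocks', fromBlocks_mulVec, hsw, dotProduct_block]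
  simp only [Sum.elim_comp_inl, Sum.elim_comp_inr, dotProduct_add, hM12]
  set N11 := Matrix.hadamard ((F⁻¹).map Complex.ofReal) Sigp with hN11
  set N21 := Matrix.hadamard (A.map Complex.ofReal) Sigpn with hN21
  set N22 := Matrix.hadamard ((D⁻¹).map Complex.ofReal) Sign with hN22
  -- hermitianity of N11 and N22
  have hN11H : N11ᴴ = N11 := by
    ext i j
    have hs := congrFun (congrFun hSp i) j
    simp only [Matrix.conjTranspose_apply] at hs ⊢
    have hf : F⁻¹ j i = F⁻¹ i j := by
      conv_lhs => rw [← hFT, ← transpose_nonsing_inv]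
      rfl
    simp [hN11, Matrix.hadamard_apply, Matrix.map_apply, star_mul', Complex.star_def,
      Complex.conj_ofReal, hf, ← hs, mul_comm]
  have hN22H : N22ᴴ = N22 := by
    ext i j
    have hs := congrFun (congrFun hSn i) j
    simp only [Matrix.conjTranspose_apply] at hs ⊢
    have hd : D⁻¹ j i = D⁻¹ i j := by
      conv_lhs => rw [← hDT, ← transpose_nonsing_inv]
      rfl
    simp [hN22, Matrix.hadamard_apply, Matrix.map_apply, star_mul', Complex.star_def,
      Complex.conj_ofReal, hd, ← hs, mul_comm]
  -- the three scalar terms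
  set z11 := star w ⬝ᵥ N11 *ᵥ w with hz11
  set z21 := star wb ⬝ᵥ N21 *ᵥ w with hz21
  set z22 := star wb ⬝ᵥ N22 *ᵥ wb with hz22
  have h12 : star w ⬝ᵥ N21ᴴ *ᵥ wb = star z21 := quad_conj' N21 w wb
  have h11r : star z11 = z11 := by
    rw [hz11]
    conv_rhs => rw [← hN11H]
    exact (quad_conj' N11 w w).symm
  have h22r : star z22 = z22 := by
    rw [hz22]
    conv_rhs => rw [← hN22H]
    exact (quad_conj' N22 wb wb).symm
  have h22re : z22 = ((z22.re : ℝ) : ℂ) := (Complex.conj_eq_iff_re.mp h22r).symm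
  have hsum : star z21 + z21 = ((2 * z21.re : ℝ) : ℂ) := by
    rw [add_comm]
    exact Complex.add_conj z21
  constructor
  · rw [h12]
    have h11im : z11.im = 0 := Complex.conj_eq_iff_im.mp h11r
    have : (z11 + star z21 + (z21 + z22)).im = 0 := by
      have := congrArg Complex.im hsum
      simp only [Complex.add_im, Complex.ofReal_im] at this ⊢
      have h22im : z22.im = 0 := Complex.conj_eq_iff_im.mp h22r
      rw [h11im, h22im]
      linarith [this]
    exact this
  · rw [h12, ← h22re]
    linear_combination hsum
end
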